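/- arXiv:2103.01362 — 6 statements merged into one kernel-verified Lean document; each statement's English description precedes it below -/
import Mathlib

section
/- Let x_k in R^N satisfy x_{k+1} = A1 x_k + B u_k for all k >= 0, with initial condition satisfying (Qperp)^T x_0 = 0. Define z~_k = Q^T x_k. Then for all k >= 0, z~_{k+1} = A~1 z~_k + B~ u_k + sum over l = 0 to k-1 of ( E_{k-l} z~_l + F_{k-l} u_l ), i.e., the projected observations satisfy the exact non-Markovian reduced dynamics with Markovian term A~1 z~_k + B~ u_k and memory operators E_j, F_j. -/
open Matrix Finset

lemma mulVec_sum' {m : Type*} [Fintype m] {r : ℕ} (A : Matrix (Fin r) m ℝ)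
    (s : Finset ℕ) (f : ℕ → m → ℝ) :
    A *ᵥ (∑ i ∈ s, f i) = ∑ i ∈ s, A *ᵥ f i := by
  exact map_sum (Matrix.mulVecLin A) f s

/-- the projected observations satisfy the exact non-Markovian
reduced dynamics when the initial condition has no complementary component. -/
theorem stmt_2 (N n p : ℕ) (hN : 0 < N) (hn : 0 < n) (hp : 0 < p) (hnN : n < N)
    (Q : Matrix (Fin N) (Fin n) ℝ) (Qperp : Matrix (Fin N) (Fin (N - n)) ℝ)
    (hQ : Qᵀ * Q = 1) (hQperp : Qperpᵀ * Qperp = 1) (hQQperp : Qᵀ * Qperp = 0)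
    (hsum : Q * Qᵀ + Qperp * Qperpᵀ = 1)
    (A1 : Matrix (Fin N) (Fin N) ℝ) (B : Matrix (Fin N) (Fin p) ℝ)
    (u : ℕ → Fin p → ℝ)
    (At : Matrix (Fin n) (Fin n) ℝ) (Bt : Matrix (Fin n) (Fin p) ℝ)
    (hAt : At = Qᵀ * A1 * Q) (hBt : Bt = Qᵀ * B)
    (E : ℕ → Matrix (Fin n) (Fin n) ℝ) (F : ℕ → Matrix (Fin n) (Fin p) ℝ)
    (hE : ∀ j, 1 ≤ j → E j =
      Qᵀ * A1 * Qperp * ((Qperpᵀ * A1 * Qperp) ^ (j - 1)) * (Qperpᵀ * A1 * Q))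
    (hF : ∀ j, 1 ≤ j → F j =
      Qᵀ * A1 * Qperp * ((Qperpᵀ * A1 * Qperp) ^ (j - 1)) * (Qperpᵀ * B))
    (x : ℕ → Fin N → ℝ)
    (hx : ∀ k, x (k + 1) = A1 *ᵥ x k + B *ᵥ u k)
    (hx0 : Qperpᵀ *ᵥ x 0 = 0)
    (z : ℕ → Fin n → ℝ) (hz : ∀ k, z k = Qᵀ *ᵥ x k) :
    ∀ k, z (k + 1) = At *ᵥ z k + Bt *ᵥ u k
      + ∑ l ∈ Finset.range k, (E (k - l) *ᵥ z l + F (k - l) *ᵥ u l) := by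
  set C := Qperpᵀ * A1 * Qperp with hC
  set D := Qperpᵀ * A1 * Q with hD
  set G := Qperpᵀ * B with hG
  set P := Qᵀ * A1 * Qperp with hP
  set v : ℕ → Fin (N - n) → ℝ := fun l => D *ᵥ z l + G *ᵥ u l with hv
  -- key fact about the complementary component
  have hw : ∀ k, Qperpᵀ *ᵥ x k = ∑ l ∈ Finset.range k, (C ^ (k - 1 - l)) *ᵥ v l := by
    intro k
    induction k with
    | zero => simp [hx0]
    | succ k ih =>
      have hsplit : Qperpᵀ * A1 = D * Qᵀ + C * Qperpᵀ := by
        have h0 : Qperpᵀ * A1 = Qperpᵀ * A1 * (Q * Qᵀ + Qperp * Qperpᵀ) := by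
          rw [hsum, Matrix.mul_one]
        rw [h0, hD, hC, Matrix.mul_add, ← Matrix.mul_assoc, ← Matrix.mul_assoc]
      calc Qperpᵀ *ᵥ x (k + 1)
          = (Qperpᵀ * A1) *ᵥ x k + G *ᵥ u k := by
            rw [hx k, Matrix.mulVec_add, Matrix.mulVec_mulVec, hG, Matrix.mulVec_mulVec]
        _ = D *ᵥ (Qᵀ *ᵥ x k) + C *ᵥ (Qperpᵀ *ᵥ x k) + G *ᵥ u k := by
            rw [hsplit, Matrix.add_mulVec, Matrix.mulVec_mulVec, Matrix.mulVec_mulVec]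
        _ = D *ᵥ z k + C *ᵥ (∑ l ∈ Finset.range k, (C ^ (k - 1 - l)) *ᵥ v l) + G *ᵥ u k := by
            rw [ih, hz k]
        _ = (∑ l ∈ Finset.range k, (C ^ (k - l)) *ᵥ v l) + v k := by
            rw [mulVec_sum']
            have h1 : ∀ l ∈ Finset.range k, C *ᵥ ((C ^ (k - 1 - l)) *ᵥ v l)
                = (C ^ (k - l)) *ᵥ v l := by
              intro l hl
              rw [Matrix.mulVec_mulVec]
              congr 1
              have hlk : l < k := Finset.mem_range.mp hl
              have h2 : k - l = (k - 1 - l) + 1 := by omega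
              rw [h2, pow_succ']
            rw [Finset.sum_congr rfl h1, hv]
            rw [add_right_comm, add_comm]
        _ = ∑ l ∈ Finset.range (k + 1), (C ^ (k + 1 - 1 - l)) *ᵥ v l := by
            rw [Finset.sum_range_succ]
            have h1 : ∑ l ∈ Finset.range k, (C ^ (k + 1 - 1 - l)) *ᵥ v l
                = ∑ l ∈ Finset.range k, (C ^ (k - l)) *ᵥ v l := by
              apply Finset.sum_congr rfl
              intro l hl
              congr 2
            rw [h1]
            simp
  intro k
  have hsplit : Qᵀ * A1 = At * Qᵀ + P * Qperpᵀ := by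
    have h0 : Qᵀ * A1 = Qᵀ * A1 * (Q * Qᵀ + Qperp * Qperpᵀ) := by
      rw [hsum, Matrix.mul_one]
    rw [h0, hAt, hP, Matrix.mul_add, ← Matrix.mul_assoc, ← Matrix.mul_assoc]
  calc z (k + 1)
      = (Qᵀ * A1) *ᵥ x k + Bt *ᵥ u k := by
        rw [hz (k + 1), hx k, Matrix.mulVec_add, Matrix.mulVec_mulVec, hBt,
          Matrix.mulVec_mulVec]
    _ = At *ᵥ (Qᵀ *ᵥ x k) + P *ᵥ (Qperpᵀ *ᵥ x k) + Bt *ᵥ u k := by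
        rw [hsplit, Matrix.add_mulVec, Matrix.mulVec_mulVec, Matrix.mulVec_mulVec]
    _ = At *ᵥ z k + Bt *ᵥ u k
        + ∑ l ∈ Finset.range k, (E (k - l) *ᵥ z l + F (k - l) *ᵥ u l) := by
        rw [hw k, hz k, mulVec_sum']
        have h1 : ∀ l ∈ Finset.range k,
            P *ᵥ ((C ^ (k - 1 - l)) *ᵥ v l)
            = E (k - l) *ᵥ z l + F (k - l) *ᵥ u l := by
          intro l hl
          have hlk : l < k := Finset.mem_range.mp hl
          have hk1 : 1 ≤ k - l := by omega
          have h2 : k - l - 1 = k - 1 - l := by omega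
          rw [hE _ hk1, hF _ hk1, h2, Matrix.mulVec_mulVec]
          simp only [hv]
          rw [Matrix.mulVec_add, Matrix.mulVec_mulVec, Matrix.mulVec_mulVec,
            Matrix.mul_assoc, Matrix.mul_assoc]
        rw [Finset.sum_congr rfl h1]
        rw [add_right_comm]
end

section
/- Let x_k in R^N satisfy x_{k+1} = A1 x_k + B u_k for all k >= 0, with initial condition satisfying (Qperp)^T x_0 = 0. Define z~_k = Q^T x_k and the output y_k = C x_k in R^s. Then for all k >= 0, y_k = C~ z~_k + sum over l = 0 to k-1 of ( G_{k-l} z~_l + H_{k-l} u_l ), where C~ = C Q and, for integers j >= 1, G_j = C Qperp ((Qperp)^T A1 Qperp)^{j-1} (Qperp)^T A1 Q and H_j = C Qperp ((Qperp)^T A1 Qperp)^{j-1} (Qperp)^T B. -/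
open Matrix Finset

theorem my_mulVec_sum {R : Type*} [CommSemiring R] {m n : Type*} [Fintype n]
    (A : Matrix m n R) {ι : Type*} (t : Finset ι) (f : ι → n → R) :
    A *ᵥ (∑ i ∈ t, f i) = ∑ i ∈ t, A *ᵥ f i := by
  simp only [← Matrix.mulVecLin_apply, map_sum]

/-- non-Markovian representation of the output. -/
theorem stmt_4 (N n p s : ℕ) (hN : 0 < N) (hn : 0 < n) (hp : 0 < p) (hs : 0 < s)
    (hnN : n < N)
    (Q : Matrix (Fin N) (Fin n) ℝ) (Qperp : Matrix (Fin N) (Fin (N - n)) ℝ)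
    (hQ : Qᵀ * Q = 1) (hQperp : Qperpᵀ * Qperp = 1) (hQQperp : Qᵀ * Qperp = 0)
    (hsum : Q * Qᵀ + Qperp * Qperpᵀ = 1)
    (A1 : Matrix (Fin N) (Fin N) ℝ) (B : Matrix (Fin N) (Fin p) ℝ)
    (C : Matrix (Fin s) (Fin N) ℝ)
    (u : ℕ → Fin p → ℝ)
    (Ct : Matrix (Fin s) (Fin n) ℝ) (hCt : Ct = C * Q)
    (G : ℕ → Matrix (Fin s) (Fin n) ℝ) (H : ℕ → Matrix (Fin s) (Fin p) ℝ)
    (hG : ∀ j, 1 ≤ j → G j =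
      C * Qperp * ((Qperpᵀ * A1 * Qperp) ^ (j - 1)) * (Qperpᵀ * A1 * Q))
    (hH : ∀ j, 1 ≤ j → H j =
      C * Qperp * ((Qperpᵀ * A1 * Qperp) ^ (j - 1)) * (Qperpᵀ * B))
    (x : ℕ → Fin N → ℝ)
    (hx : ∀ k, x (k + 1) = A1 *ᵥ x k + B *ᵥ u k)
    (hx0 : Qperpᵀ *ᵥ x 0 = 0)
    (z : ℕ → Fin n → ℝ) (hz : ∀ k, z k = Qᵀ *ᵥ x k)
    (y : ℕ → Fin s → ℝ) (hy : ∀ k, y k = C *ᵥ x k) :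
    ∀ k, y k = Ct *ᵥ z k
      + ∑ l ∈ Finset.range k, (G (k - l) *ᵥ z l + H (k - l) *ᵥ u l) := by

  set Ap := Qperpᵀ * A1 * Qperp with hAp
  set M := Qperpᵀ * A1 * Q with hM
  set Nb := Qperpᵀ * B with hNb
  set w : ℕ → Fin (N - n) → ℝ := fun k => Qperpᵀ *ᵥ x k with hw
  have hxdecomp : ∀ k, x k = Q *ᵥ z k + Qperp *ᵥ w k := by
    intro k
    have h := congrArg (fun A => A *ᵥ x k) hsum
    simpa [add_mulVec, ← mulVec_mulVec, hz, hw] using h.symm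
  have hwrec : ∀ k, w (k + 1) = M *ᵥ z k + Ap *ᵥ w k + Nb *ᵥ u k := by
    intro k
    show Qperpᵀ *ᵥ x (k + 1) = _
    rw [hx k, mulVec_add, hxdecomp k, mulVec_add]
    simp only [mulVec_add, mulVec_mulVec, hM, hAp, hNb, Matrix.mul_assoc]
  have hwsum : ∀ k, w k = ∑ l ∈ Finset.range k,
      (Ap ^ (k - 1 - l)) *ᵥ (M *ᵥ z l + Nb *ᵥ u l) := by
    intro k
    induction k with
    | zero => simpa [hw] using hx0
    | succ k ih =>
      rw [hwrec k, ih, Finset.sum_range_succ]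
      have hmv : Ap *ᵥ ∑ l ∈ Finset.range k,
          (Ap ^ (k - 1 - l)) *ᵥ (M *ᵥ z l + Nb *ᵥ u l)
          = ∑ l ∈ Finset.range k,
          (Ap ^ (k + 1 - 1 - l)) *ᵥ (M *ᵥ z l + Nb *ᵥ u l) := by
        rw [my_mulVec_sum]
        refine Finset.sum_congr rfl fun l hl => ?_
        rw [mulVec_mulVec, ← pow_succ']
        have hlk := Finset.mem_range.mp hl
        have he : k - 1 - l + 1 = k + 1 - 1 - l := by omega
        rw [he]
      rw [hmv]
      have h0 : (Ap ^ (k + 1 - 1 - k)) *ᵥ (M *ᵥ z k + Nb *ᵥ u k)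
          = M *ᵥ z k + Nb *ᵥ u k := by
        simp
      rw [h0]
      abel
  intro k
  rw [hy k, hxdecomp k, mulVec_add, mulVec_mulVec, ← hCt, hwsum k, my_mulVec_sum, my_mulVec_sum]
  congr 1
  refine Finset.sum_congr rfl fun l hl => ?_
  have hlk := Finset.mem_range.mp hl
  have h1 : 1 ≤ k - l := by omega
  rw [hG _ h1, hH _ h1]
  have he : k - l - 1 = k - 1 - l := by omega
  rw [he, mulVec_add]
  simp only [mulVec_add, mulVec_mulVec, Matrix.mul_assoc]
end

section
/- (Proposition 3.2, state operators.) For i = 1, ..., Nr, let trajectories x_k^{(i)} in R^N satisfy x_{k+1}^{(i)} = A1 x_k^{(i)} + B u_k^{(i)} with x_0^{(i)} = Q zbar_0^{(i)}, and set zbar_k^{(i)} = Q^T x_k^{(i)}. Let L >= 1, suppose L * Nr >= (n + p) * L (i.e., Nr >= n + p), and suppose the batch data matrix Dbreve in R^{(n+p)L x L*Nr}, whose column indexed by (k, i) for k = 1, ..., L and i = 1, ..., Nr is the concatenation of zbar_{k-1}^{(i)}, u_{k-1}^{(i)}, zbar_{k-2}^{(i)}, u_{k-2}^{(i)}, ...,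 zbar_{k-L}^{(i)}, u_{k-L}^{(i)} (with the convention that zbar_l^{(i)} = 0 and u_l^{(i)} = 0 for negative integers l), has full rank (n+p)L. Then the least squares problem minimizing over Ebreve_1, ..., Ebreve_L in R^{n x n} and Fbreve_1, ..., Fbreve_L in R^{n x p} the objective sum over k = 1 to L and i = 1 to Nr of || Delta_z^{(i)}(k) - sum over l = k-L to k-1 of ( Ebreve_{k-l} zbar_l^{(i)} + Fbreve_{k-l} u_l^{(i)} ) ||_2^2, where Delta_z^{(i)}(k) = zbar_{k+1}^{(i)} - ( A~1 zbar_k^{(i)} + B~ u_k^{(i)} ), is uniquely minimized at Ebreve_l = E_l and Fbreve_l = F_l for l = 1, ..., L, with objective value 0. -/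
open Matrix Finset

/-- Proposition 3.2, state operators: batch operator inference
uniquely recovers the intrusive non-Markovian state operators E_1, ..., E_L and
F_1, ..., F_L with zero objective value.  Here the column of the batch data
matrix indexed by (k, i), with k : Fin L encoding time step k+1, stacks
zbar_{k-j} and u_{k-j} for j = 0, ..., L-1 (zero for negative time indices). -/
theorem stmt_14 (N n p Nr L : ℕ) (hN : 0 < N) (hn : 0 < n) (hp : 0 < p)
    (hNr : 0 < Nr) (hnN : n < N) (hL : 1 ≤ L)
    (Q : Matrix (Fin N) (Fin n) ℝ) (Qperp : Matrix (Fin N) (Fin (N - n)) ℝ)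
    (hQ : Qᵀ * Q = 1) (hQperp : Qperpᵀ * Qperp = 1) (hQQperp : Qᵀ * Qperp = 0)
    (hsum : Q * Qᵀ + Qperp * Qperpᵀ = 1)
    (A1 : Matrix (Fin N) (Fin N) ℝ) (B : Matrix (Fin N) (Fin p) ℝ)
    (u : Fin Nr → ℕ → Fin p → ℝ)
    (At : Matrix (Fin n) (Fin n) ℝ) (Bt : Matrix (Fin n) (Fin p) ℝ)
    (hAt : At = Qᵀ * A1 * Q) (hBt : Bt = Qᵀ * B)
    (E : ℕ → Matrix (Fin n) (Fin n) ℝ) (F : ℕ → Matrix (Fin n) (Fin p) ℝ)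
    (hE : ∀ j, 1 ≤ j → E j =
      Qᵀ * A1 * Qperp * ((Qperpᵀ * A1 * Qperp) ^ (j - 1)) * (Qperpᵀ * A1 * Q))
    (hF : ∀ j, 1 ≤ j → F j =
      Qᵀ * A1 * Qperp * ((Qperpᵀ * A1 * Qperp) ^ (j - 1)) * (Qperpᵀ * B))
    (zbar0 : Fin Nr → Fin n → ℝ)
    (x : Fin Nr → ℕ → Fin N → ℝ)
    (hx0 : ∀ i, x i 0 = Q *ᵥ zbar0 i)
    (hx : ∀ i k, x i (k + 1) = A1 *ᵥ x i k + B *ᵥ u i k)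
    (zbar : Fin Nr → ℕ → Fin n → ℝ)
    (hzbar : ∀ i k, zbar i k = Qᵀ *ᵥ x i k)
    (Dbreve : Matrix (Fin L × (Fin n ⊕ Fin p)) (Fin L × Fin Nr) ℝ)
    (hDbreve1 : ∀ (j : Fin L) (a : Fin n) (k : Fin L) (i : Fin Nr),
      Dbreve (j, Sum.inl a) (k, i) =
        if (j : ℕ) ≤ (k : ℕ) then zbar i ((k : ℕ) - (j : ℕ)) a else 0)
    (hDbreve2 : ∀ (j : Fin L) (b : Fin p) (k : Fin L) (i : Fin Nr),
      Dbreve (j, Sum.inr b) (k, i) =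
        if (j : ℕ) ≤ (k : ℕ) then u i ((k : ℕ) - (j : ℕ)) b else 0)
    (hNrnp : n + p ≤ Nr) (hLNr : (n + p) * L ≤ L * Nr)
    (hrank : Dbreve.rank = (n + p) * L)
    (Δ : Fin Nr → ℕ → Fin n → ℝ)
    (hΔ : ∀ i k, Δ i k = zbar i (k + 1) - (At *ᵥ zbar i k + Bt *ᵥ u i k)) :
    (∑ k : Fin L, ∑ i, ∑ a,
      ((Δ i ((k : ℕ) + 1)
        - ∑ l ∈ Finset.Ico ((k : ℕ) + 1 - L) ((k : ℕ) + 1),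
            (E ((k : ℕ) + 1 - l) *ᵥ zbar i l + F ((k : ℕ) + 1 - l) *ᵥ u i l)) a) ^ 2)
      = 0 ∧
    ∀ (Eb : ℕ → Matrix (Fin n) (Fin n) ℝ) (Fb : ℕ → Matrix (Fin n) (Fin p) ℝ),
      (∑ k : Fin L, ∑ i, ∑ a,
        ((Δ i ((k : ℕ) + 1)
          - ∑ l ∈ Finset.Ico ((k : ℕ) + 1 - L) ((k : ℕ) + 1),
              (Eb ((k : ℕ) + 1 - l) *ᵥ zbar i l + Fb ((k : ℕ) + 1 - l) *ᵥ u i l)) a) ^ 2)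
        ≤ (∑ k : Fin L, ∑ i, ∑ a,
          ((Δ i ((k : ℕ) + 1)
            - ∑ l ∈ Finset.Ico ((k : ℕ) + 1 - L) ((k : ℕ) + 1),
                (E ((k : ℕ) + 1 - l) *ᵥ zbar i l + F ((k : ℕ) + 1 - l) *ᵥ u i l)) a) ^ 2) →
      ∀ l, 1 ≤ l → l ≤ L → Eb l = E l ∧ Fb l = F l := by
  have hQpQ : Qperpᵀ * Q = (0 : Matrix (Fin (N - n)) (Fin n) ℝ) := by
    have := congrArg Matrix.transpose hQQperp
    simpa using this
  have hdecomp : ∀ (i : Fin Nr) (k : ℕ),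
      x i k = Q *ᵥ zbar i k + Qperp *ᵥ (Qperpᵀ *ᵥ x i k) := by
    intro i k
    rw [hzbar, mulVec_mulVec, mulVec_mulVec, ← add_mulVec, hsum, one_mulVec]
  -- recursion for the unresolved state
  have hwrec : ∀ (i : Fin Nr) (k : ℕ), Qperpᵀ *ᵥ x i (k + 1)
      = (Qperpᵀ * A1 * Qperp) *ᵥ (Qperpᵀ *ᵥ x i k)
        + ((Qperpᵀ * A1 * Q) *ᵥ zbar i k + (Qperpᵀ * B) *ᵥ u i k) := by
    intro i k
    rw [hx]
    conv_lhs => rw [hdecomp i k]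
    simp only [mulVec_add, mulVec_mulVec, Matrix.mul_assoc]
    abel
  -- solution formula for the unresolved state
  have hw : ∀ (i : Fin Nr) (k : ℕ), Qperpᵀ *ᵥ x i k =
      ∑ l ∈ Finset.range k, ((Qperpᵀ * A1 * Qperp) ^ (k - 1 - l)) *ᵥ
        ((Qperpᵀ * A1 * Q) *ᵥ zbar i l + (Qperpᵀ * B) *ᵥ u i l) := by
    intro i k
    induction k with
    | zero => simp [hx0, mulVec_mulVec, hQpQ]
    | succ k ih =>
      rw [hwrec i k, ih, Finset.sum_range_succ]
      simp only [Nat.add_sub_cancel, Nat.sub_self, pow_zero, one_mulVec]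
      have hAp : (Qperpᵀ * A1 * Qperp) *ᵥ
          (∑ l ∈ Finset.range k, ((Qperpᵀ * A1 * Qperp) ^ (k - 1 - l)) *ᵥ
            ((Qperpᵀ * A1 * Q) *ᵥ zbar i l + (Qperpᵀ * B) *ᵥ u i l))
          = ∑ l ∈ Finset.range k, ((Qperpᵀ * A1 * Qperp) ^ (k - l)) *ᵥ
            ((Qperpᵀ * A1 * Q) *ᵥ zbar i l + (Qperpᵀ * B) *ᵥ u i l) := by
        have hms := map_sum (Qperpᵀ * A1 * Qperp).mulVecLin
          (fun l => ((Qperpᵀ * A1 * Qperp) ^ (k - 1 - l)) *ᵥ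
            ((Qperpᵀ * A1 * Q) *ᵥ zbar i l + (Qperpᵀ * B) *ᵥ u i l)) (Finset.range k)
        simp only [mulVecLin_apply] at hms
        rw [hms]
        refine Finset.sum_congr rfl fun l hl => ?_
        simp only [Finset.mem_range] at hl
        rw [mulVec_mulVec, ← pow_succ', show k - 1 - l + 1 = k - l from by omega]
      rw [hAp]
  -- key closure identity
  have key : ∀ (i : Fin Nr) (k : ℕ), Δ i k =
      ∑ l ∈ Finset.range k, (E (k - l) *ᵥ zbar i l + F (k - l) *ᵥ u i l) := by
    intro i k
    have hz1 : zbar i (k + 1) = At *ᵥ zbar i k + Bt *ᵥ u i k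
        + (Qᵀ * A1 * Qperp) *ᵥ (Qperpᵀ *ᵥ x i k) := by
      rw [hzbar i (k + 1), hx]
      conv_lhs => rw [hdecomp i k]
      rw [hAt, hBt]
      simp only [mulVec_add, mulVec_mulVec, Matrix.mul_assoc]
      abel
    have h2 : (Qᵀ * A1 * Qperp) *ᵥ (Qperpᵀ *ᵥ x i k)
        = ∑ l ∈ Finset.range k, (E (k - l) *ᵥ zbar i l + F (k - l) *ᵥ u i l) := by
      rw [hw]
      have hms := map_sum (Qᵀ * A1 * Qperp).mulVecLin
        (fun l => ((Qperpᵀ * A1 * Qperp) ^ (k - 1 - l)) *ᵥ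
          ((Qperpᵀ * A1 * Q) *ᵥ zbar i l + (Qperpᵀ * B) *ᵥ u i l)) (Finset.range k)
      simp only [mulVecLin_apply] at hms
      rw [hms]
      refine Finset.sum_congr rfl fun l hl => ?_
      simp only [Finset.mem_range] at hl
      rw [hE (k - l) (by omega), hF (k - l) (by omega),
        show (k - l - 1) = k - 1 - l from by omega]
      simp [mulVec_add, mulVec_mulVec, Matrix.mul_assoc]
    rw [hΔ, hz1, h2]
    abel
  -- the Ico index set is really range (k+1)
  have hIco : ∀ (k : Fin L), Finset.Ico ((k : ℕ) + 1 - L) ((k : ℕ) + 1)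
      = Finset.range ((k : ℕ) + 1) := by
    intro k
    rw [show ((k : ℕ) + 1 - L) = 0 from by omega, Nat.Ico_zero_eq_range]
  have part1 : (∑ k : Fin L, ∑ i, ∑ a,
      ((Δ i ((k : ℕ) + 1)
        - ∑ l ∈ Finset.Ico ((k : ℕ) + 1 - L) ((k : ℕ) + 1),
            (E ((k : ℕ) + 1 - l) *ᵥ zbar i l + F ((k : ℕ) + 1 - l) *ᵥ u i l)) a) ^ 2)
      = 0 := by
    refine Finset.sum_eq_zero fun k _ => Finset.sum_eq_zero fun i _ =>
      Finset.sum_eq_zero fun a _ => ?_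
    rw [hIco, key, sub_self]
    simp
  refine ⟨part1, ?_⟩
  intro Eb Fb h l hl1 hlL
  have hobj0 : (∑ k : Fin L, ∑ i, ∑ a,
      ((Δ i ((k : ℕ) + 1)
        - ∑ l ∈ Finset.Ico ((k : ℕ) + 1 - L) ((k : ℕ) + 1),
            (Eb ((k : ℕ) + 1 - l) *ᵥ zbar i l + Fb ((k : ℕ) + 1 - l) *ᵥ u i l)) a) ^ 2)
      = 0 := by
    refine le_antisymm ?_ ?_
    · rw [part1] at h; exact h
    · positivity
  have hterm : ∀ (k : Fin L) (i : Fin Nr) (a : Fin n),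
      (Δ i ((k : ℕ) + 1)
        - ∑ l ∈ Finset.Ico ((k : ℕ) + 1 - L) ((k : ℕ) + 1),
            (Eb ((k : ℕ) + 1 - l) *ᵥ zbar i l + Fb ((k : ℕ) + 1 - l) *ᵥ u i l)) a = 0 := by
    intro k i a
    have h1 := (Finset.sum_eq_zero_iff_of_nonneg (fun k _ => by positivity)).mp hobj0
      k (Finset.mem_univ k)
    have h2 := (Finset.sum_eq_zero_iff_of_nonneg (fun i _ => by positivity)).mp h1
      i (Finset.mem_univ i)
    have h3 := (Finset.sum_eq_zero_iff_of_nonneg (fun a _ => by positivity)).mp h2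
      a (Finset.mem_univ a)
    exact pow_eq_zero_iff (two_ne_zero) |>.mp h3
  -- difference residual identity, entrywise
  have hdiff : ∀ (k : Fin L) (i : Fin Nr) (a : Fin n),
      (∑ l ∈ Finset.range ((k : ℕ) + 1),
        (((Eb ((k : ℕ) + 1 - l) - E ((k : ℕ) + 1 - l)) *ᵥ zbar i l) a
          + ((Fb ((k : ℕ) + 1 - l) - F ((k : ℕ) + 1 - l)) *ᵥ u i l) a)) = 0 := by
    intro k i a
    have ht : Δ i ((k : ℕ) + 1) a
        - (∑ l ∈ Finset.range ((k : ℕ) + 1),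
            (Eb ((k : ℕ) + 1 - l) *ᵥ zbar i l + Fb ((k : ℕ) + 1 - l) *ᵥ u i l)) a = 0 := by
      have := hterm k i a
      rw [hIco] at this
      simpa [Pi.sub_apply] using this
    have hkeya : Δ i ((k : ℕ) + 1) a
        = (∑ l ∈ Finset.range ((k : ℕ) + 1),
            (E ((k : ℕ) + 1 - l) *ᵥ zbar i l + F ((k : ℕ) + 1 - l) *ᵥ u i l)) a := by
      rw [key]
    calc (∑ l ∈ Finset.range ((k : ℕ) + 1),
        (((Eb ((k : ℕ) + 1 - l) - E ((k : ℕ) + 1 - l)) *ᵥ zbar i l) a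
          + ((Fb ((k : ℕ) + 1 - l) - F ((k : ℕ) + 1 - l)) *ᵥ u i l) a))
        = (∑ l ∈ Finset.range ((k : ℕ) + 1),
            (Eb ((k : ℕ) + 1 - l) *ᵥ zbar i l + Fb ((k : ℕ) + 1 - l) *ᵥ u i l)) a
          - (∑ l ∈ Finset.range ((k : ℕ) + 1),
            (E ((k : ℕ) + 1 - l) *ᵥ zbar i l + F ((k : ℕ) + 1 - l) *ᵥ u i l)) a := by
          simp only [Finset.sum_apply, Pi.add_apply, sub_mulVec, Pi.sub_apply,
            ← Finset.sum_sub_distrib]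
          refine Finset.sum_congr rfl fun l _ => ?_
          ring
      _ = 0 := by
          rw [← hkeya]
          linarith [ht]
  -- the coefficient matrix of the differences
  set X : Matrix (Fin n) (Fin L × (Fin n ⊕ Fin p)) ℝ := fun a jb =>
    Sum.elim (fun b => (Eb ((jb.1 : ℕ) + 1) - E ((jb.1 : ℕ) + 1)) a b)
      (fun b => (Fb ((jb.1 : ℕ) + 1) - F ((jb.1 : ℕ) + 1)) a b) jb.2 with hXdef
  have hXD : X * Dbreve = 0 := by
    ext a ki
    obtain ⟨k, i⟩ := ki
    rw [Matrix.mul_apply]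
    rw [Fintype.sum_prod_type]
    have hinner : ∀ j : Fin L,
        (∑ s : Fin n ⊕ Fin p, X a (j, s) * Dbreve (j, s) (k, i))
        = if (j : ℕ) ≤ (k : ℕ) then
            (((Eb ((j : ℕ) + 1) - E ((j : ℕ) + 1)) *ᵥ zbar i ((k : ℕ) - (j : ℕ))) a
              + ((Fb ((j : ℕ) + 1) - F ((j : ℕ) + 1)) *ᵥ u i ((k : ℕ) - (j : ℕ))) a)
          else 0 := by
      intro j
      rw [Fintype.sum_sum_type]
      simp only [hXdef, Sum.elim_inl, Sum.elim_inr, hDbreve1, hDbreve2, mul_ite, mul_zero]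
      by_cases hjk : (j : ℕ) ≤ (k : ℕ)
      · have hjk' : j ≤ k := hjk
        simp only [if_pos hjk, if_pos hjk', mulVec, dotProduct, Matrix.sub_apply]
      · have hjk' : ¬ j ≤ k := hjk
        simp [if_neg hjk, if_neg hjk']
    simp only [hinner]
    rw [Fin.sum_univ_eq_sum_range (fun j => if j ≤ (k : ℕ) then
      (((Eb (j + 1) - E (j + 1)) *ᵥ zbar i ((k : ℕ) - j)) a
        + ((Fb (j + 1) - F (j + 1)) *ᵥ u i ((k : ℕ) - j)) a) else 0) L]
    have hsub : ∑ j ∈ Finset.range L, (if j ≤ (k : ℕ) then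
        (((Eb (j + 1) - E (j + 1)) *ᵥ zbar i ((k : ℕ) - j)) a
          + ((Fb (j + 1) - F (j + 1)) *ᵥ u i ((k : ℕ) - j)) a) else 0)
        = ∑ j ∈ Finset.range ((k : ℕ) + 1),
        (((Eb (j + 1) - E (j + 1)) *ᵥ zbar i ((k : ℕ) - j)) a
          + ((Fb (j + 1) - F (j + 1)) *ᵥ u i ((k : ℕ) - j)) a) := by
      rw [← Finset.sum_subset (Finset.range_subset_range.mpr (by omega : (k : ℕ) + 1 ≤ L))
        (fun m _ hm => if_neg (by simp only [Finset.mem_range, not_lt] at hm; omega))]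
      exact Finset.sum_congr rfl fun m hm => if_pos (by
        simp only [Finset.mem_range] at hm; omega)
    rw [hsub]
    have hrefl := Finset.sum_range_reflect (fun l =>
      (((Eb ((k : ℕ) + 1 - l) - E ((k : ℕ) + 1 - l)) *ᵥ zbar i l) a
        + ((Fb ((k : ℕ) + 1 - l) - F ((k : ℕ) + 1 - l)) *ᵥ u i l) a)) ((k : ℕ) + 1)
    have hmatch : ∑ j ∈ Finset.range ((k : ℕ) + 1),
        (((Eb (j + 1) - E (j + 1)) *ᵥ zbar i ((k : ℕ) - j)) a
          + ((Fb (j + 1) - F (j + 1)) *ᵥ u i ((k : ℕ) - j)) a)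
        = ∑ j ∈ Finset.range ((k : ℕ) + 1), (fun l =>
        (((Eb ((k : ℕ) + 1 - l) - E ((k : ℕ) + 1 - l)) *ᵥ zbar i l) a
          + ((Fb ((k : ℕ) + 1 - l) - F ((k : ℕ) + 1 - l)) *ᵥ u i l) a))
          ((k : ℕ) + 1 - 1 - j) := by
      refine Finset.sum_congr rfl fun j hj => ?_
      simp only [Finset.mem_range] at hj
      have e1 : (k : ℕ) + 1 - 1 - j = (k : ℕ) - j := by omega
      have e2 : (k : ℕ) + 1 - ((k : ℕ) - j) = j + 1 := by omega
      simp only [e1, e2]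
    rw [hmatch, hrefl]
    simpa using hdiff k i a
  -- full row rank forces X = 0
  have hsurj : Function.Surjective Dbreve.mulVecLin := by
    rw [← LinearMap.range_eq_top]
    apply Submodule.eq_top_of_finrank_eq
    rw [show Module.finrank ℝ (LinearMap.range Dbreve.mulVecLin) = Dbreve.rank from rfl,
      hrank, Module.finrank_pi]
    simp only [Fintype.card_prod, Fintype.card_sum, Fintype.card_fin]
    ring
  have hX0 : ∀ a c, X a c = 0 := by
    intro a c
    obtain ⟨v, hv⟩ := hsurj (Pi.single c 1)
    rw [mulVecLin_apply] at hv
    have h1 : (X * Dbreve) *ᵥ v = X *ᵥ (Dbreve *ᵥ v) := (mulVec_mulVec v X Dbreve).symm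
    rw [hXD, zero_mulVec, hv, mulVec_single] at h1
    have := congrFun h1.symm a
    simpa using this
  have hl' : l - 1 < L := by omega
  have hcast : ((⟨l - 1, hl'⟩ : Fin L) : ℕ) + 1 = l := by simp; omega
  constructor
  · ext a b
    have hz := hX0 a (⟨l - 1, hl'⟩, Sum.inl b)
    rw [hXdef] at hz
    simp only [Sum.elim_inl, hcast] at hz
    have h2 : (Eb l - E l) a b = 0 := hz
    have := sub_eq_zero.mp (by simpa [Matrix.sub_apply] using h2)
    exact this
  · ext a b
    have hz := hX0 a (⟨l - 1, hl'⟩, Sum.inr b)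
    rw [hXdef] at hz
    simp only [Sum.elim_inr, hcast] at hz
    have h2 : (Fb l - F l) a b = 0 := hz
    have := sub_eq_zero.mp (by simpa [Matrix.sub_apply] using h2)
    exact this
end

section
/- (Proposition 3.2, output operators.) For i = 1, ..., Nr, let trajectories x_k^{(i)} in R^N satisfy x_{k+1}^{(i)} = A1 x_k^{(i)} + B u_k^{(i)} with x_0^{(i)} = Q zbar_0^{(i)}, and set zbar_k^{(i)} = Q^T x_k^{(i)} and y_k^{(i)} = C x_k^{(i)}. Let L >= 1, suppose Nr >= n + p, and suppose the batch data matrix Dbreve in R^{(n+p)L x L*Nr}, whose column indexed by (k, i) for k = 1, ..., L and i = 1, ..., Nr is the concatenation of zbar_{k-1}^{(i)}, u_{k-1}^{(i)}, ..., zbar_{k-L}^{(i)}, u_{k-L}^{(i)} (with zbar_l^{(i)} = 0 and u_l^{(i)} = 0 for negative l), has full rank (n+p)L. Then the least squares problem minimizing over Gbreve_1, ..., Gbreve_L in R^{s x n} and Hbreve_1, ..., Hbreve_L in R^{s x p} the objective sum over k = 1 to L and i = 1 to Nr of || Delta_y^{(i)}(k) - sum over l = k-L to k-1 of ( Gbreve_{k-l}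 zbar_l^{(i)} + Hbreve_{k-l} u_l^{(i)} ) ||_2^2, where Delta_y^{(i)}(k) = y_k^{(i)} - C~ zbar_k^{(i)}, is uniquely minimized at Gbreve_l = G_l and Hbreve_l = H_l for l = 1, ..., L, with objective value 0. -/
open Matrix Finset

/-- Auxiliary: matrix acting on a finite sum of vectors. -/
lemma aux_mulVec_sum {m k : Type*} [Fintype m] [Fintype k] (A : Matrix m k ℝ)
    (s : Finset ℕ) (v : ℕ → k → ℝ) :
    A *ᵥ (∑ i ∈ s, v i) = ∑ i ∈ s, A *ᵥ v i := by
  ext j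
  simp [Matrix.mulVec, dotProduct, Finset.mul_sum]
  rw [Finset.sum_comm]

/-- Auxiliary: a triple sum of squares vanishing forces each entry to vanish. -/
lemma aux_sum3_sq {α β γ : Type*} [Fintype α] [Fintype β] [Fintype γ]
    (f : α → β → γ → ℝ) (h : ∑ a, ∑ b, ∑ c, (f a b c) ^ 2 = 0) :
    ∀ a b c, f a b c = 0 := by
  intro a b c
  have h1 := (Finset.sum_eq_zero_iff_of_nonneg
    (fun i _ => Finset.sum_nonneg fun j _ => Finset.sum_nonneg fun l _ => sq_nonneg _)).mp
    h a (Finset.mem_univ a)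
  have h2 := (Finset.sum_eq_zero_iff_of_nonneg
    (fun j _ => Finset.sum_nonneg fun l _ => sq_nonneg _)).mp h1 b (Finset.mem_univ b)
  have h3 := (Finset.sum_eq_zero_iff_of_nonneg
    (fun l _ => sq_nonneg _)).mp h2 c (Finset.mem_univ c)
  exact pow_eq_zero_iff two_ne_zero |>.mp h3

/-- Proposition 3.2, output operators: batch operator inference
uniquely recovers the intrusive non-Markovian output operators G_1, ..., G_L
and H_1, ..., H_L with zero objective value.  Here the column of the batch data
matrix indexed by (k, i), with k : Fin L encoding time step k+1, stacks
zbar_{k-j} and u_{k-j} for j = 0, ..., L-1 (zero for negative time indices). -/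
theorem stmt_15 (N n p s Nr L : ℕ) (hN : 0 < N) (hn : 0 < n) (hp : 0 < p)
    (hs : 0 < s) (hNr : 0 < Nr) (hnN : n < N) (hL : 1 ≤ L)
    (Q : Matrix (Fin N) (Fin n) ℝ) (Qperp : Matrix (Fin N) (Fin (N - n)) ℝ)
    (hQ : Qᵀ * Q = 1) (hQperp : Qperpᵀ * Qperp = 1) (hQQperp : Qᵀ * Qperp = 0)
    (hsum : Q * Qᵀ + Qperp * Qperpᵀ = 1)
    (A1 : Matrix (Fin N) (Fin N) ℝ) (B : Matrix (Fin N) (Fin p) ℝ)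
    (C : Matrix (Fin s) (Fin N) ℝ)
    (u : Fin Nr → ℕ → Fin p → ℝ)
    (At : Matrix (Fin n) (Fin n) ℝ) (Bt : Matrix (Fin n) (Fin p) ℝ)
    (Ct : Matrix (Fin s) (Fin n) ℝ)
    (hAt : At = Qᵀ * A1 * Q) (hBt : Bt = Qᵀ * B) (hCt : Ct = C * Q)
    (G : ℕ → Matrix (Fin s) (Fin n) ℝ) (H : ℕ → Matrix (Fin s) (Fin p) ℝ)
    (hG : ∀ j, 1 ≤ j → G j =
      C * Qperp * ((Qperpᵀ * A1 * Qperp) ^ (j - 1)) * (Qperpᵀ * A1 * Q))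
    (hH : ∀ j, 1 ≤ j → H j =
      C * Qperp * ((Qperpᵀ * A1 * Qperp) ^ (j - 1)) * (Qperpᵀ * B))
    (zbar0 : Fin Nr → Fin n → ℝ)
    (x : Fin Nr → ℕ → Fin N → ℝ)
    (hx0 : ∀ i, x i 0 = Q *ᵥ zbar0 i)
    (hx : ∀ i k, x i (k + 1) = A1 *ᵥ x i k + B *ᵥ u i k)
    (zbar : Fin Nr → ℕ → Fin n → ℝ)
    (hzbar : ∀ i k, zbar i k = Qᵀ *ᵥ x i k)
    (y : Fin Nr → ℕ → Fin s → ℝ)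
    (hy : ∀ i k, y i k = C *ᵥ x i k)
    (Dbreve : Matrix (Fin L × (Fin n ⊕ Fin p)) (Fin L × Fin Nr) ℝ)
    (hDbreve1 : ∀ (j : Fin L) (a : Fin n) (k : Fin L) (i : Fin Nr),
      Dbreve (j, Sum.inl a) (k, i) =
        if (j : ℕ) ≤ (k : ℕ) then zbar i ((k : ℕ) - (j : ℕ)) a else 0)
    (hDbreve2 : ∀ (j : Fin L) (b : Fin p) (k : Fin L) (i : Fin Nr),
      Dbreve (j, Sum.inr b) (k, i) =
        if (j : ℕ) ≤ (k : ℕ) then u i ((k : ℕ) - (j : ℕ)) b else 0)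
    (hNrnp : n + p ≤ Nr) (hLNr : (n + p) * L ≤ L * Nr)
    (hrank : Dbreve.rank = (n + p) * L)
    (Δ : Fin Nr → ℕ → Fin s → ℝ)
    (hΔ : ∀ i k, Δ i k = y i k - Ct *ᵥ zbar i k) :
    (∑ k : Fin L, ∑ i, ∑ a,
      ((Δ i ((k : ℕ) + 1)
        - ∑ l ∈ Finset.Ico ((k : ℕ) + 1 - L) ((k : ℕ) + 1),
            (G ((k : ℕ) + 1 - l) *ᵥ zbar i l + H ((k : ℕ) + 1 - l) *ᵥ u i l)) a) ^ 2)
      = 0 ∧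
    ∀ (Gb : ℕ → Matrix (Fin s) (Fin n) ℝ) (Hb : ℕ → Matrix (Fin s) (Fin p) ℝ),
      (∑ k : Fin L, ∑ i, ∑ a,
        ((Δ i ((k : ℕ) + 1)
          - ∑ l ∈ Finset.Ico ((k : ℕ) + 1 - L) ((k : ℕ) + 1),
              (Gb ((k : ℕ) + 1 - l) *ᵥ zbar i l + Hb ((k : ℕ) + 1 - l) *ᵥ u i l)) a) ^ 2)
        ≤ (∑ k : Fin L, ∑ i, ∑ a,
          ((Δ i ((k : ℕ) + 1)
            - ∑ l ∈ Finset.Ico ((k : ℕ) + 1 - L) ((k : ℕ) + 1),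
                (G ((k : ℕ) + 1 - l) *ᵥ zbar i l + H ((k : ℕ) + 1 - l) *ᵥ u i l)) a) ^ 2) →
      ∀ l, 1 ≤ l → l ≤ L → Gb l = G l ∧ Hb l = H l := by
  classical
  have hQpQ : Qperpᵀ * Q = 0 := by
    have h := congrArg Matrix.transpose hQQperp
    simpa [Matrix.transpose_mul] using h
  set F := Qperpᵀ * A1 * Qperp with hFdef
  set E := Qperpᵀ * A1 * Q with hEdef
  set Bp := Qperpᵀ * B with hBpdef
  have hdecomp : Qperpᵀ * A1 = E * Qᵀ + F * Qperpᵀ := by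
    calc Qperpᵀ * A1 = Qperpᵀ * A1 * (Q * Qᵀ + Qperp * Qperpᵀ) := by
          rw [hsum, Matrix.mul_one]
      _ = E * Qᵀ + F * Qperpᵀ := by
          rw [hEdef, hFdef]
          simp only [Matrix.mul_add, Matrix.mul_assoc]
  -- the unresolved dynamics
  have hw : ∀ i k, Qperpᵀ *ᵥ x i k =
      ∑ l ∈ Finset.range k, (F ^ (k - 1 - l)) *ᵥ (E *ᵥ zbar i l + Bp *ᵥ u i l) := by
    intro i k
    induction k with
    | zero => simp [hx0 i, Matrix.mulVec_mulVec, hQpQ]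
    | succ k ih =>
      have hstep : Qperpᵀ *ᵥ x i (k + 1)
          = F *ᵥ (Qperpᵀ *ᵥ x i k) + (E *ᵥ zbar i k + Bp *ᵥ u i k) := by
        rw [hx i k, Matrix.mulVec_add, Matrix.mulVec_mulVec, Matrix.mulVec_mulVec,
          hdecomp, Matrix.add_mulVec, ← Matrix.mulVec_mulVec (x i k) E Qᵀ,
          ← Matrix.mulVec_mulVec (x i k) F Qperpᵀ, ← hzbar i k, ← hBpdef]
        abel
      rw [hstep, ih, aux_mulVec_sum, Finset.sum_range_succ]
      simp only [Nat.add_sub_cancel, Nat.sub_self, pow_zero, Matrix.one_mulVec]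
      congr 1
      apply Finset.sum_congr rfl
      intro l hl
      have hl' := Finset.mem_range.mp hl
      rw [Matrix.mulVec_mulVec, ← pow_succ',
        show k - 1 - l + 1 = k - l from by omega]
  -- the residual output
  have hΔ' : ∀ i k, Δ i k = (C * Qperp) *ᵥ (Qperpᵀ *ᵥ x i k) := by
    intro i k
    have hCdec : C * Q * Qᵀ + C * Qperp * Qperpᵀ = C := by
      calc C * Q * Qᵀ + C * Qperp * Qperpᵀ = C * (Q * Qᵀ + Qperp * Qperpᵀ) := by
            simp only [Matrix.mul_add, Matrix.mul_assoc]
        _ = C := by rw [hsum, Matrix.mul_one]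
    rw [hΔ, hy, hzbar, hCt, Matrix.mulVec_mulVec, Matrix.mulVec_mulVec]
    have hx' : C *ᵥ x i k = (C * Q * Qᵀ) *ᵥ x i k + (C * Qperp * Qperpᵀ) *ᵥ x i k := by
      rw [← Matrix.add_mulVec, hCdec]
    rw [hx']
    abel
  -- the key identity
  have hkey : ∀ i (k : ℕ), Δ i (k + 1)
      = ∑ l ∈ Finset.range (k + 1),
          (G (k + 1 - l) *ᵥ zbar i l + H (k + 1 - l) *ᵥ u i l) := by
    intro i k
    rw [hΔ' i (k + 1), hw i (k + 1), aux_mulVec_sum]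
    apply Finset.sum_congr rfl
    intro l hl
    have hlk : l < k + 1 := Finset.mem_range.mp hl
    have h1 : 1 ≤ k + 1 - l := by omega
    rw [hG _ h1, hH _ h1]
    have he : k + 1 - 1 - l = k + 1 - l - 1 := by omega
    rw [Matrix.mulVec_mulVec, he, Matrix.mulVec_add, Matrix.mulVec_mulVec,
      Matrix.mulVec_mulVec]
  have hIco : ∀ k : Fin L,
      Finset.Ico ((k : ℕ) + 1 - L) ((k : ℕ) + 1) = Finset.range ((k : ℕ) + 1) := by
    intro k
    have hkL := k.isLt
    have h0 : (k : ℕ) + 1 - L = 0 := by omega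
    rw [h0, Nat.Ico_zero_eq_range]
  have hzero : (∑ k : Fin L, ∑ i, ∑ a,
      ((Δ i ((k : ℕ) + 1)
        - ∑ l ∈ Finset.Ico ((k : ℕ) + 1 - L) ((k : ℕ) + 1),
            (G ((k : ℕ) + 1 - l) *ᵥ zbar i l + H ((k : ℕ) + 1 - l) *ᵥ u i l)) a) ^ 2)
      = 0 := by
    apply Finset.sum_eq_zero; intro k _
    apply Finset.sum_eq_zero; intro i _
    apply Finset.sum_eq_zero; intro a _
    rw [hIco k, ← hkey i (k : ℕ)]
    simp
  refine ⟨hzero, ?_⟩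
  intro Gb Hb hle l hl1 hlL
  rw [hzero] at hle
  have hGb0 : (∑ k : Fin L, ∑ i, ∑ a,
      ((Δ i ((k : ℕ) + 1)
        - ∑ l ∈ Finset.Ico ((k : ℕ) + 1 - L) ((k : ℕ) + 1),
            (Gb ((k : ℕ) + 1 - l) *ᵥ zbar i l + Hb ((k : ℕ) + 1 - l) *ᵥ u i l)) a) ^ 2)
      = 0 :=
    le_antisymm hle (Finset.sum_nonneg fun _ _ => Finset.sum_nonneg fun _ _ =>
      Finset.sum_nonneg fun _ _ => sq_nonneg _)
  have hpt := aux_sum3_sq (fun (k : Fin L) i a =>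
      ((Δ i ((k : ℕ) + 1)
        - ∑ l ∈ Finset.Ico ((k : ℕ) + 1 - L) ((k : ℕ) + 1),
            (Gb ((k : ℕ) + 1 - l) *ᵥ zbar i l + Hb ((k : ℕ) + 1 - l) *ᵥ u i l)) a)) hGb0
  -- pointwise difference identity
  have hdiff : ∀ (k : Fin L) i (σ : Fin s),
      ∑ l ∈ Finset.range ((k : ℕ) + 1),
        (((Gb ((k : ℕ) + 1 - l) - G ((k : ℕ) + 1 - l)) *ᵥ zbar i l) σ
          + ((Hb ((k : ℕ) + 1 - l) - H ((k : ℕ) + 1 - l)) *ᵥ u i l) σ) = 0 := by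
    intro k i σ
    have hG' := congrFun (hkey i (k : ℕ)) σ
    simp only [Finset.sum_apply, Pi.add_apply] at hG'
    have hGb' : ((Δ i ((k : ℕ) + 1)
        - ∑ l ∈ Finset.Ico ((k : ℕ) + 1 - L) ((k : ℕ) + 1),
            (Gb ((k : ℕ) + 1 - l) *ᵥ zbar i l + Hb ((k : ℕ) + 1 - l) *ᵥ u i l)) σ) = 0 :=
      hpt k i σ
    rw [hIco k] at hGb'
    simp only [Pi.sub_apply, sub_eq_zero, Finset.sum_apply, Pi.add_apply] at hGb'
    calc ∑ l ∈ Finset.range ((k : ℕ) + 1),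
          (((Gb ((k : ℕ) + 1 - l) - G ((k : ℕ) + 1 - l)) *ᵥ zbar i l) σ
            + ((Hb ((k : ℕ) + 1 - l) - H ((k : ℕ) + 1 - l)) *ᵥ u i l) σ)
        = ∑ l ∈ Finset.range ((k : ℕ) + 1),
            (((Gb ((k : ℕ) + 1 - l) *ᵥ zbar i l) σ + (Hb ((k : ℕ) + 1 - l) *ᵥ u i l) σ)
              - ((G ((k : ℕ) + 1 - l) *ᵥ zbar i l) σ + (H ((k : ℕ) + 1 - l) *ᵥ u i l) σ)) := by
          apply Finset.sum_congr rfl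
          intro m _
          simp only [Matrix.sub_mulVec, Pi.sub_apply]
          ring
      _ = 0 := by
          rw [Finset.sum_sub_distrib, ← hGb', ← hG', sub_self]
  -- the coefficient-difference matrix
  set M : Matrix (Fin s) (Fin L × (Fin n ⊕ Fin p)) ℝ :=
    Matrix.of (fun σ jc => Sum.elim
      (fun a => Gb ((jc.1 : ℕ) + 1) σ a - G ((jc.1 : ℕ) + 1) σ a)
      (fun b => Hb ((jc.1 : ℕ) + 1) σ b - H ((jc.1 : ℕ) + 1) σ b) jc.2) with hMdef
  have hMl : ∀ σ (j : Fin L) a, M σ (j, Sum.inl a)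
      = Gb ((j : ℕ) + 1) σ a - G ((j : ℕ) + 1) σ a := fun _ _ _ => rfl
  have hMr : ∀ σ (j : Fin L) b, M σ (j, Sum.inr b)
      = Hb ((j : ℕ) + 1) σ b - H ((j : ℕ) + 1) σ b := fun _ _ _ => rfl
  have hMD : M * Dbreve = 0 := by
    ext σ ki
    obtain ⟨k, i⟩ := ki
    rw [Matrix.mul_apply, Matrix.zero_apply, Fintype.sum_prod_type]
    set g : ℕ → ℝ := fun m =>
      (((Gb (m + 1) - G (m + 1)) *ᵥ zbar i ((k : ℕ) - m)) σ
        + ((Hb (m + 1) - H (m + 1)) *ᵥ u i ((k : ℕ) - m)) σ) with hgdef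
    have hterm : ∀ j : Fin L,
        (∑ c : Fin n ⊕ Fin p, M σ (j, c) * Dbreve (j, c) (k, i))
          = if (j : ℕ) ≤ (k : ℕ) then g (j : ℕ) else 0 := by
      intro j
      rw [Fintype.sum_sum_type]
      by_cases hjk : (j : ℕ) ≤ (k : ℕ)
      · rw [if_pos hjk]
        simp only [hgdef, hMl, hMr, hDbreve1, hDbreve2, if_pos hjk,
          Matrix.mulVec, dotProduct, Matrix.sub_apply]
      · rw [if_neg hjk]
        simp [hMl, hMr, hDbreve1, hDbreve2, hjk]
    have hkL := k.isLt
    calc (∑ j : Fin L, ∑ c : Fin n ⊕ Fin p, M σ (j, c) * Dbreve (j, c) (k, i))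
        = ∑ j : Fin L, (if (j : ℕ) ≤ (k : ℕ) then g (j : ℕ) else 0) :=
          Finset.sum_congr rfl (fun j _ => hterm j)
      _ = ∑ m ∈ Finset.range L, (if m ≤ (k : ℕ) then g m else 0) :=
          Fin.sum_univ_eq_sum_range (fun m => if m ≤ (k : ℕ) then g m else 0) L
      _ = ∑ m ∈ (Finset.range L).filter (fun m => m ≤ (k : ℕ)), g m :=
          (Finset.sum_filter _ _).symm
      _ = ∑ m ∈ Finset.range ((k : ℕ) + 1), g m := by
          congr 1
          ext m
          simp only [Finset.mem_filter, Finset.mem_range]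
          omega
      _ = ∑ m ∈ Finset.range ((k : ℕ) + 1), g ((k : ℕ) + 1 - 1 - m) :=
          (Finset.sum_range_reflect g _).symm
      _ = ∑ m ∈ Finset.range ((k : ℕ) + 1),
            (((Gb ((k : ℕ) + 1 - m) - G ((k : ℕ) + 1 - m)) *ᵥ zbar i m) σ
              + ((Hb ((k : ℕ) + 1 - m) - H ((k : ℕ) + 1 - m)) *ᵥ u i m) σ) := by
          apply Finset.sum_congr rfl
          intro m hm
          have hm' := Finset.mem_range.mp hm
          simp only [hgdef]
          have e0 : (k : ℕ) + 1 - 1 - m = (k : ℕ) - m := by omega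
          have e1 : (k : ℕ) - m + 1 = (k : ℕ) + 1 - m := by omega
          have e2 : (k : ℕ) - ((k : ℕ) - m) = m := by omega
          rw [e0, e1, e2]
      _ = 0 := hdiff k i σ
  -- full row rank forces M = 0
  have hcard : Fintype.card (Fin L × (Fin n ⊕ Fin p)) = (n + p) * L := by
    simp [Fintype.card_prod, Fintype.card_sum, mul_comm]
  have hker : LinearMap.ker (Dbreveᵀ.mulVecLin) = ⊥ := by
    have h1 := LinearMap.finrank_range_add_finrank_ker (Dbreveᵀ.mulVecLin)
    have h2 : Dbreveᵀ.rank = Module.finrank ℝ (LinearMap.range Dbreveᵀ.mulVecLin) := rfl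
    have h3 : Dbreveᵀ.rank = (n + p) * L := by rw [Matrix.rank_transpose, hrank]
    have h4 : Module.finrank ℝ ((Fin L × (Fin n ⊕ Fin p)) → ℝ) = (n + p) * L := by
      rw [Module.finrank_fintype_fun_eq_card, hcard]
    rw [h4, ← h2, h3] at h1
    have h5 : Module.finrank ℝ (LinearMap.ker Dbreveᵀ.mulVecLin) = 0 := by omega
    exact Submodule.finrank_eq_zero.mp h5
  have hM0 : ∀ σ c, M σ c = 0 := by
    intro σ c
    have hmem : (fun c => M σ c) ∈ LinearMap.ker Dbreveᵀ.mulVecLin := by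
      rw [LinearMap.mem_ker]
      funext ki
      obtain ⟨k, i⟩ := ki
      have h : (M * Dbreve) σ (k, i) = 0 := by rw [hMD]; rfl
      rw [Matrix.mul_apply] at h
      simp only [Matrix.mulVecLin_apply, Matrix.mulVec, dotProduct,
        Matrix.transpose_apply, Pi.zero_apply]
      rw [← h]
      apply Finset.sum_congr rfl
      intros
      ring
    rw [hker, Submodule.mem_bot] at hmem
    exact congrFun hmem c
  have hl' : l - 1 < L := by omega
  have hll : l - 1 + 1 = l := by omega
  constructor
  · ext σ a
    have h : Gb (l - 1 + 1) σ a - G (l - 1 + 1) σ a = 0 :=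
      hM0 σ (⟨l - 1, hl'⟩, Sum.inl a)
    rw [hll] at h
    exact sub_eq_zero.mp h
  · ext σ b
    have h : Hb (l - 1 + 1) σ b - H (l - 1 + 1) σ b = 0 :=
      hM0 σ (⟨l - 1, hl'⟩, Sum.inr b)
    rw [hll] at h
    exact sub_eq_zero.mp h
end

section
/- Let a >= 0 and e_j >= 0 for all integers j >= 1, let L be a nonnegative integer, and let z0 be a real number. Define scalar sequences with common initial condition z_0 = z_0^{(L)} = z_0^{(0)} = z0 by: z_{k+1} = a z_k + sum over l = 0 to k-1 of e_{k-l} z_l (exact non-Markovian dynamics); z_{k+1}^{(L)} = a z_k^{(L)} + sum over l = max(k-L, 0) to k-1 of e_{k-l} z_l^{(L)} (lag-L truncated dynamics); and z_{k+1}^{(0)} = a z_k^{(0)} (Markovian dynamics). Then for every k >= 0, | z_k - z_k^{(L)} | <= | z_k - z_k^{(0)} |; that is, the lag-L truncated non-Markovian model is at least as accurate as the Markovian model at every time step. -/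
open Finset

lemma stmt_17_aux (a : ℝ) (ha : 0 ≤ a) (e : ℕ → ℝ) (he : ∀ j, 1 ≤ j → 0 ≤ e j)
    (L : ℕ) (z0 : ℝ) (hz0 : 0 ≤ z0) (z zL zM : ℕ → ℝ)
    (hzInit : z 0 = z0) (hzLInit : zL 0 = z0) (hzMInit : zM 0 = z0)
    (hz : ∀ k, z (k + 1) = a * z k + ∑ l ∈ Finset.range k, e (k - l) * z l)
    (hzL : ∀ k, zL (k + 1) = a * zL k + ∑ l ∈ Finset.Ico (k - L) k, e (k - l) * zL l)
    (hzM : ∀ k, zM (k + 1) = a * zM k) :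
    ∀ k, 0 ≤ zM k ∧ zM k ≤ zL k ∧ zL k ≤ z k := by
  intro k
  induction k using Nat.strong_induction_on with
  | _ k ih =>
    match k with
    | 0 => simp [hzInit, hzLInit, hzMInit, hz0]
    | Nat.succ k =>
      have ihk := ih k (Nat.lt_succ_self k)
      refine ⟨?_, ?_, ?_⟩
      · rw [hzM]; exact mul_nonneg ha ihk.1
      · rw [hzM, hzL]
        have h1 : a * zM k ≤ a * zL k := mul_le_mul_of_nonneg_left ihk.2.1 ha
        have h2 : 0 ≤ ∑ l ∈ Finset.Ico (k - L) k, e (k - l) * zL l := by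
          refine Finset.sum_nonneg fun l hl => ?_
          have hlk : l < k := (Finset.mem_Ico.mp hl).2
          have ihl := ih l (hlk.trans (Nat.lt_succ_self k))
          exact mul_nonneg (he _ (Nat.le_sub_of_add_le (by omega))) (ihl.1.trans ihl.2.1)
        linarith
      · rw [hzL, hz]
        have h1 : a * zL k ≤ a * z k := mul_le_mul_of_nonneg_left ihk.2.2 ha
        have h2 : ∑ l ∈ Finset.Ico (k - L) k, e (k - l) * zL l
            ≤ ∑ l ∈ Finset.range k, e (k - l) * z l := by
          calc ∑ l ∈ Finset.Ico (k - L) k, e (k - l) * zL l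
              ≤ ∑ l ∈ Finset.Ico (k - L) k, e (k - l) * z l := by
                refine Finset.sum_le_sum fun l hl => ?_
                have hlk : l < k := (Finset.mem_Ico.mp hl).2
                have ihl := ih l (hlk.trans (Nat.lt_succ_self k))
                exact mul_le_mul_of_nonneg_left ihl.2.2 (he _ (by omega))
            _ ≤ ∑ l ∈ Finset.range k, e (k - l) * z l := by
                refine Finset.sum_le_sum_of_subset_of_nonneg ?_ fun l hl _ => ?_
                · intro x hx
                  exact Finset.mem_range.mpr (Finset.mem_Ico.mp hx).2
                · have hlk : l < k := Finset.mem_range.mp hl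
                  have ihl := ih l (hlk.trans (Nat.lt_succ_self k))
                  exact mul_nonneg (he _ (by omega))
                    ((ihl.1.trans ihl.2.1).trans ihl.2.2)
        linarith

/-- for scalar dynamics with nonnegative coefficients, the lag-L
truncated non-Markovian model is at least as accurate as the Markovian model at
every time step. -/
theorem stmt_17 (a : ℝ) (ha : 0 ≤ a) (e : ℕ → ℝ) (he : ∀ j, 1 ≤ j → 0 ≤ e j)
    (L : ℕ) (z0 : ℝ) (z zL zM : ℕ → ℝ)
    (hzInit : z 0 = z0) (hzLInit : zL 0 = z0) (hzMInit : zM 0 = z0)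
    (hz : ∀ k, z (k + 1) = a * z k + ∑ l ∈ Finset.range k, e (k - l) * z l)
    (hzL : ∀ k, zL (k + 1) = a * zL k + ∑ l ∈ Finset.Ico (k - L) k, e (k - l) * zL l)
    (hzM : ∀ k, zM (k + 1) = a * zM k) :
    ∀ k, |z k - zL k| ≤ |z k - zM k| := by
  intro k
  rcases le_or_gt 0 z0 with hz0 | hz0
  · have h := stmt_17_aux a ha e he L z0 hz0 z zL zM hzInit hzLInit hzMInit hz hzL hzM
    have hk := h k
    rw [abs_of_nonneg (by linarith [hk.2.1, hk.2.2]), abs_of_nonneg (by linarith [hk.2.1, hk.2.2])]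
    linarith [hk.2.1]
  · have h := stmt_17_aux a ha e he L (-z0) (by linarith)
      (fun n => -z n) (fun n => -zL n) (fun n => -zM n)
      (by simp [hzInit]) (by simp [hzLInit]) (by simp [hzMInit])
      (fun n => by beta_reduce; rw [hz n]; simp [mul_neg, Finset.sum_neg_distrib, neg_add]; ring)
      (fun n => by beta_reduce; rw [hzL n]; simp [mul_neg, Finset.sum_neg_distrib, neg_add]; ring)
      (fun n => by beta_reduce; rw [hzM n]; ring)
    have hk := h k
    simp only [neg_le_neg_iff] at hk
    rw [abs_of_nonpos (by linarith [hk.2.1, hk.2.2]), abs_of_nonpos (by linarith [hk.2.1, hk.2.2])]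
    linarith [hk.2.1]
end

section
/- Let A in R^{2 x 2} be symmetric positive definite and let q, qperp in R^2 be orthonormal vectors. Define a = q^T A q, and for integers j >= 1 define e_j = (q^T A qperp)^2 (qperp^T A qperp)^{j-1}. Let L be a nonnegative integer and z0 a real number, and define scalar sequences with z_0 = z_0^{(L)} = z_0^{(0)} = z0 by z_{k+1} = a z_k + sum over l = 0 to k-1 of e_{k-l} z_l, z_{k+1}^{(L)} = a z_k^{(L)} + sum over l = max(k-L, 0) to k-1 of e_{k-l} z_l^{(L)}, and z_{k+1}^{(0)} = a z_k^{(0)}. Then a > 0, qperp^T A qperp > 0, e_j >= 0 for all j >= 1, and consequently | z_k - z_k^{(L)} | <= | z_k - z_k^{(0)} | for every k >= 0. -/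
open Matrix Finset

lemma stmt18_aux (a : ℝ) (ha : 0 < a) (e : ℕ → ℝ) (he : ∀ j, 1 ≤ j → 0 ≤ e j)
    (L : ℕ) (z0 : ℝ) (hz0 : 0 ≤ z0) (z zL zM : ℕ → ℝ)
    (hzInit : z 0 = z0) (hzLInit : zL 0 = z0) (hzMInit : zM 0 = z0)
    (hz : ∀ k, z (k + 1) = a * z k + ∑ l ∈ Finset.range k, e (k - l) * z l)
    (hzL : ∀ k, zL (k + 1) = a * zL k + ∑ l ∈ Finset.Ico (k - L) k, e (k - l) * zL l)
    (hzM : ∀ k, zM (k + 1) = a * zM k) :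
    ∀ k, 0 ≤ zM k ∧ zM k ≤ zL k ∧ zL k ≤ z k := by
  intro k
  induction k using Nat.strong_induction_on with
  | _ k ih =>
    match k with
    | 0 => simp [hzInit, hzLInit, hzMInit, hz0]
    | k + 1 =>
      have hik := ih k (Nat.lt_succ_self k)
      have hsum1 : 0 ≤ ∑ l ∈ Finset.Ico (k - L) k, e (k - l) * zL l := by
        apply Finset.sum_nonneg
        intro l hl
        have hlk : l < k := (Finset.mem_Ico.mp hl).2
        have h1 : 1 ≤ k - l := Nat.le_sub_of_add_le (by omega)
        have := ih l (Nat.lt_succ_of_lt hlk)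
        exact mul_nonneg (he _ h1) (this.1.trans this.2.1)
      refine ⟨?_, ?_, ?_⟩
      · rw [hzM]; exact mul_nonneg ha.le hik.1
      · rw [hzM, hzL]
        have : a * zM k ≤ a * zL k := mul_le_mul_of_nonneg_left hik.2.1 ha.le
        linarith
      · rw [hz, hzL]
        have hsplit : (∑ l ∈ Finset.Ico 0 (k - L), e (k - l) * z l) +
            (∑ l ∈ Finset.Ico (k - L) k, e (k - l) * z l) =
            ∑ l ∈ Finset.range k, e (k - l) * z l := by
          rw [Finset.range_eq_Ico]
          exact Finset.sum_Ico_consecutive _ (Nat.zero_le _) (Nat.sub_le _ _)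
        have h1 : 0 ≤ ∑ l ∈ Finset.Ico 0 (k - L), e (k - l) * z l := by
          apply Finset.sum_nonneg
          intro l hl
          have hlk : l < k := lt_of_lt_of_le (Finset.mem_Ico.mp hl).2 (Nat.sub_le _ _)
          have := ih l (Nat.lt_succ_of_lt hlk)
          exact mul_nonneg (he _ (Nat.le_sub_of_add_le (by omega)))
            (this.1.trans (this.2.1.trans this.2.2))
        have h2 : ∑ l ∈ Finset.Ico (k - L) k, e (k - l) * zL l ≤
            ∑ l ∈ Finset.Ico (k - L) k, e (k - l) * z l := by
          apply Finset.sum_le_sum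
          intro l hl
          have hlk : l < k := (Finset.mem_Ico.mp hl).2
          have := ih l (Nat.lt_succ_of_lt hlk)
          exact mul_le_mul_of_nonneg_left this.2.2 (he _ (Nat.le_sub_of_add_le (by omega)))
        have : a * zL k ≤ a * z k := mul_le_mul_of_nonneg_left hik.2.2 ha.le
        linarith

/-- for a 2x2 symmetric positive definite matrix A and
orthonormal vectors q, qperp, with a = qᵀ A q and
e_j = (qᵀ A qperp)² (qperpᵀ A qperp)^{j-1}, the scalar lag-L truncated
non-Markovian model is at least as accurate as the Markovian model. -/
theorem stmt_18 (A : Matrix (Fin 2) (Fin 2) ℝ)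
    (hAsymm : Aᵀ = A)
    (hApos : ∀ v : Fin 2 → ℝ, v ≠ 0 → 0 < v ⬝ᵥ (A *ᵥ v))
    (q qperp : Fin 2 → ℝ)
    (hq : q ⬝ᵥ q = 1) (hqperp : qperp ⬝ᵥ qperp = 1) (horth : q ⬝ᵥ qperp = 0)
    (a : ℝ) (ha : a = q ⬝ᵥ (A *ᵥ q))
    (e : ℕ → ℝ)
    (he : ∀ j, 1 ≤ j →
      e j = (q ⬝ᵥ (A *ᵥ qperp)) ^ 2 * (qperp ⬝ᵥ (A *ᵥ qperp)) ^ (j - 1))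
    (L : ℕ) (z0 : ℝ) (z zL zM : ℕ → ℝ)
    (hzInit : z 0 = z0) (hzLInit : zL 0 = z0) (hzMInit : zM 0 = z0)
    (hz : ∀ k, z (k + 1) = a * z k + ∑ l ∈ Finset.range k, e (k - l) * z l)
    (hzL : ∀ k, zL (k + 1) = a * zL k + ∑ l ∈ Finset.Ico (k - L) k, e (k - l) * zL l)
    (hzM : ∀ k, zM (k + 1) = a * zM k) :
    0 < a ∧ 0 < qperp ⬝ᵥ (A *ᵥ qperp) ∧ (∀ j, 1 ≤ j → 0 ≤ e j) ∧
    ∀ k, |z k - zL k| ≤ |z k - zM k| := by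
  have hqne : q ≠ 0 := by
    intro h; rw [h] at hq; simp at hq
  have hqpne : qperp ≠ 0 := by
    intro h; rw [h] at hqperp; simp at hqperp
  have hapos : 0 < a := ha ▸ hApos q hqne
  have hbpos : 0 < qperp ⬝ᵥ (A *ᵥ qperp) := hApos qperp hqpne
  have hee : ∀ j, 1 ≤ j → 0 ≤ e j := by
    intro j hj
    rw [he j hj]
    exact mul_nonneg (sq_nonneg _) (pow_nonneg hbpos.le _)
  refine ⟨hapos, hbpos, hee, ?_⟩
  intro k
  rcases le_or_gt 0 z0 with h0 | h0
  · have H := stmt18_aux a hapos e hee L z0 h0 z zL zM hzInit hzLInit hzMInit hz hzL hzM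
    have HH := H k
    have h1 : 0 ≤ z k - zL k := by linarith [HH.2.2]
    have h2 : z k - zL k ≤ z k - zM k := by linarith [HH.2.1]
    rw [abs_of_nonneg h1, abs_of_nonneg (h1.trans h2)]
    exact h2
  · have H := stmt18_aux a hapos e hee L (-z0) (by linarith)
      (fun n => -z n) (fun n => -zL n) (fun n => -zM n)
      (by simp [hzInit]) (by simp [hzLInit]) (by simp [hzMInit])
      (by intro k; simp [hz k, Finset.sum_neg_distrib, mul_neg]; ring)
      (by intro k; simp [hzL k, Finset.sum_neg_distrib, mul_neg]; ring)
      (by intro k; simp [hzM k])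
    have HH := H k
    have h1 : z k - zL k ≤ 0 := by linarith [HH.2.2]
    have h2 : z k - zM k ≤ z k - zL k := by linarith [HH.2.1]
    rw [abs_of_nonpos h1, abs_of_nonpos (h2.trans h1)]
    linarith
end
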